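/- Let $m, k \geq 0$ be integers and $a, b, c, d$ elements of a commutative ring (or field of characteristic zero). Then the coefficient of $x^{m+2k}$ in the polynomial $(ax+b)^{m+2k}(cx+d)^m$ equals $a^{2k}(ad-bc)^m H_{m,k}\left(\frac{ad+bc}{ad-bc}\right)$, where $H_{m,k}(t) = \frac{1}{2^m(m+2k)!}\frac{d^{m+2k}}{dt^{m+2k}}[(t^2-1)^m(t-1)^{2k}]$, interpreted as a polynomial identity (valid whenever $ad - bc$ is invertible, or as the evident polynomial identity after clearing denominators). -/
import Mathlib


open Polynomial

/-- `H_{m,k}(t) = 1/(2^m (m+2k)!) · (d/dt)^{m+2k} [(t²-1)^m (t-1)^{2k}]`. -/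
noncomputable def Hpoly (m k : ℕ) (t : ℝ) : ℝ :=
  (1 / (2 ^ m * ((m + 2 * k).factorial : ℝ))) *
    iteratedDeriv (m + 2 * k) (fun s : ℝ => (s ^ 2 - 1) ^ m * (s - 1) ^ (2 * k)) t

lemma iteratedDeriv_polyEval (n : ℕ) (p : ℝ[X]) :
    iteratedDeriv n (fun x => p.eval x) = fun x => (derivative^[n] p).eval x := by
  induction n generalizing p with
  | zero => simp
  | succ n ih =>
    rw [iteratedDeriv_succ', Function.iterate_succ_apply]
    rw [show deriv (fun x => p.eval x) = fun x => (derivative p).eval x from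
      funext fun x => Polynomial.deriv p]
    exact ih _

lemma coeff_lin_pow (a b : ℝ) (N j : ℕ) :
    ((C a * X + C b) ^ N).coeff j = (N.choose j : ℝ) * a ^ j * b ^ (N - j) := by
  rw [add_pow, finset_sum_coeff]
  have hterm : ∀ i ∈ Finset.range (N + 1),
      ((C a * X) ^ i * (C b) ^ (N - i) * ((N.choose i : ℕ) : ℝ[X])).coeff j
        = if j = i then (N.choose i : ℝ) * a ^ i * b ^ (N - i) else 0 := by
    intro i _
    rw [mul_pow, ← C_pow, ← C_pow, ← C_eq_natCast, mul_assoc, mul_assoc, ← C_mul,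
      mul_comm (C (a ^ i)), coeff_mul_C, coeff_mul_C, coeff_X_pow]
    split_ifs <;> ring
  rw [Finset.sum_congr rfl hterm, Finset.sum_ite_eq (Finset.range (N + 1)) j]
  by_cases hj : j ≤ N
  · simp [Finset.mem_range, Nat.lt_succ_iff, hj]
  · simp [Finset.mem_range, Nat.lt_succ_iff, hj, Nat.choose_eq_zero_of_lt (by omega : N < j)]

lemma key_nat (m k i : ℕ) (hi : i ≤ m + 2 * k) :
    (m + 2 * k).choose i * (m + 2 * k).descFactorial (m + 2 * k - i) * m.descFactorial i
      = (m + 2 * k).choose i * m.choose i * (m + 2 * k).factorial := by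
  rw [Nat.descFactorial_eq_factorial_mul_choose, Nat.descFactorial_eq_factorial_mul_choose,
    Nat.choose_symm hi, ← Nat.choose_mul_factorial_mul_factorial hi]
  ring

/-- The coefficient of `x^(m+2k)` in `(ax+b)^(m+2k) (cx+d)^m` equals
`a^(2k) (ad-bc)^m H_{m,k}((ad+bc)/(ad-bc))`, whenever `ad - bc` is invertible. -/
theorem stmt3 (m k : ℕ) (a b c d : ℝ) (h : a * d - b * c ≠ 0) :
    ((C a * X + C b) ^ (m + 2 * k) * (C c * X + C d) ^ m).coeff (m + 2 * k)
      = a ^ (2 * k) * (a * d - b * c) ^ m * Hpoly m k ((a * d + b * c) / (a * d - b * c)) := by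
  set D := a * d - b * c with hD
  set t : ℝ := (a * d + b * c) / D with ht
  -- rewrite the function in Hpoly as a polynomial evaluation
  have hP : (fun s : ℝ => (s ^ 2 - 1) ^ m * (s - 1) ^ (2 * k))
      = fun s : ℝ => (((X - C 1) ^ (m + 2 * k) * (X + C 1) ^ m : ℝ[X])).eval s := by
    funext s
    simp only [eval_mul, eval_pow, eval_sub, eval_add, eval_X, eval_C]
    rw [show (s ^ 2 - 1 : ℝ) = (s - 1) * (s + 1) from by ring, mul_pow, pow_add]
    ring
  have ht1 : t - 1 = 2 * (b * c) / D := by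
    rw [ht]; field_simp; rw [hD]; ring
  have ht2 : t + 1 = 2 * (a * d) / D := by
    rw [ht]; field_simp; rw [hD]; ring
  -- compute the RHS derivative
  rw [Hpoly, hP, iteratedDeriv_polyEval, iterate_derivative_mul]
  simp only [iterate_derivative_X_sub_pow, iterate_derivative_X_add_pow]
  rw [eval_finset_sum]
  simp only [smul_mul_assoc, mul_smul_comm, eval_smul, smul_eq_mul, eval_mul, eval_pow,
    eval_sub, eval_add, eval_X, eval_C, eval_natCast, nsmul_eq_mul]
  -- compute the LHS
  rw [coeff_mul, Finset.Nat.sum_antidiagonal_eq_sum_range_succ_mk]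
  simp only [coeff_lin_pow]
  rw [← Finset.sum_range_reflect]
  simp only [Nat.succ_sub_one]
  rw [Finset.mul_sum, Finset.mul_sum]
  refine Finset.sum_congr rfl fun i hi => ?_
  rw [Finset.mem_range, Nat.lt_succ_iff] at hi
  have e2 : m + 2 * k - (m + 2 * k - i) = i := by omega
  rw [e2, Nat.choose_symm hi]
  by_cases him : i ≤ m
  · obtain ⟨j, hj⟩ : ∃ j, m = i + j := ⟨m - i, by omega⟩
    have e4 : m + 2 * k - i = j + 2 * k := by omega
    rw [e4, ht1, ht2, show m - i = j by omega]
    have key : (((m + 2 * k).choose i : ℝ) * ((m + 2 * k).descFactorial (j + 2 * k) : ℝ)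
          * ((m).descFactorial i : ℝ))
        = ((m + 2 * k).choose i : ℝ) * ((m).choose i : ℝ) * ((m + 2 * k).factorial : ℝ) := by
      have h0 := key_nat m k i (by omega)
      rw [e4] at h0
      exact_mod_cast h0
    have hfac : (((m + 2 * k).factorial : ℕ) : ℝ) ≠ 0 :=
      Nat.cast_ne_zero.mpr (Nat.factorial_ne_zero _)
    calc (((m + 2 * k).choose i : ℕ) : ℝ) * a ^ (j + 2 * k) * b ^ i
          * (((m).choose i : ℝ) * c ^ i * d ^ j)
        = (((m + 2 * k).choose i : ℝ) * ((m).choose i : ℝ) * ((m + 2 * k).factorial : ℝ))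
            * (a ^ (2 * k) * (b * c) ^ i * (a * d) ^ j) / ((m + 2 * k).factorial : ℝ) := by
          field_simp
          ring
      _ = (((m + 2 * k).choose i : ℝ) * ((m + 2 * k).descFactorial (j + 2 * k) : ℝ)
            * ((m).descFactorial i : ℝ))
            * (a ^ (2 * k) * (b * c) ^ i * (a * d) ^ j) / ((m + 2 * k).factorial : ℝ) := by
          rw [key]
      _ = a ^ (2 * k) * D ^ m * (1 / (2 ^ m * ((m + 2 * k).factorial : ℝ))
            * (((m + 2 * k).choose i : ℝ) * (((m + 2 * k).descFactorial (j + 2 * k) : ℝ)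
              * (2 * (b * c) / D) ^ i * (((m).descFactorial i : ℝ)
                * (2 * (a * d) / D) ^ j)))) := by
          rw [div_pow, div_pow, hj]
          field_simp
          ring
  · have hm1 : ((m).choose i : ℝ) = 0 := by
      rw [Nat.choose_eq_zero_of_lt (by omega)]; exact Nat.cast_zero
    have hm2 : ((m).descFactorial i : ℝ) = 0 := by
      rw [Nat.descFactorial_eq_zero_iff_lt.mpr (by omega)]; exact Nat.cast_zero
    simp [hm1, hm2]
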